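/- Let A be a real N×N matrix, B = (1/2)(A + Aᵀ) its symmetric part and C = (1/2)(A - Aᵀ) its skew-symmetric part. Assume B is positive definite. Then the spectral condition number of A satisfies κ(A) = ‖A‖₂·‖A⁻¹‖₂ ≤ (λ_max(B) + ρ(C)) / λ_min(B), where ρ(C) is the spectral radius of C and λ_max(B), λ_min(B) are the extreme eigenvalues of B. -/

import Mathlib

/-!
Write `A = B + C` with `B` the symmetric and `C` the skew-symmetric part. Since `xᵀ C x = 0`, the
quadratic form of `A` is that of `B`, so `λ_min(B) ‖x‖² ≤ ⟪x, A x⟫`; hence `A` is bounded below by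
`λ_min(B)` and `‖A⁻¹‖ ≤ 1 / λ_min(B)`. On the other side `‖A‖ ≤ ‖B‖ + ‖C‖ = λ_max(B) + ‖C‖`, and the
complexification of `C` is skew-Hermitian, hence normal, so its norm is its spectral radius.
-/

open Matrix WithLp
open scoped Matrix.Norms.L2Operator MatrixOrder RealInnerProductSpace

section
variable {m n : Type*} [Fintype m] [Fintype n]

lemma Matrix.dotProduct_mulVec_half_smul_add_transpose {K : Type*} [Field K] [NeZero (2 : K)]
    (A : Matrix n n K) (x : n → K) :
    x ⬝ᵥ ((1/2 : K) • (A + Aᵀ)) *ᵥ x = x ⬝ᵥ A *ᵥ x := by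
  rw [smul_mulVec, add_mulVec, dotProduct_smul, dotProduct_add, dotProduct_transpose_mulVec,
    smul_eq_mul]
  field_simp
  ring

variable [DecidableEq n]

lemma Matrix.IsHermitian.iInf_eigenvalues_mul_dotProduct_le [Nonempty n] {B : Matrix n n ℝ}
    (hB : B.IsHermitian) (x : n → ℝ) :
    (⨅ i, hB.eigenvalues i) * (x ⬝ᵥ x) ≤ x ⬝ᵥ B *ᵥ x := by
  have hsa : IsSelfAdjoint B := hB.isSelfAdjoint
  have hle : algebraMap ℝ (Matrix n n ℝ) (⨅ i, hB.eigenvalues i) ≤ B := by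
    refine algebraMap_le_of_le_spectrum fun r hr => ?_
    rw [hB.spectrum_real_eq_range_eigenvalues] at hr
    obtain ⟨i, rfl⟩ := hr
    exact ciInf_le (Set.finite_range _).bddBelow i
  have := (le_iff.mp hle).dotProduct_mulVec_nonneg x
  simpa [sub_mulVec, Algebra.algebraMap_eq_smul_one, smul_mulVec, dotProduct_sub,
    dotProduct_smul] using this

lemma Matrix.IsHermitian.l2_opNorm_le_of_abs_eigenvalues_le {B : Matrix n n ℝ} (hB : B.IsHermitian) {c : ℝ}
    (hc : 0 ≤ c) (h : ∀ i, |hB.eigenvalues i| ≤ c) : ‖B‖ ≤ c := by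
  have hsa : IsSelfAdjoint B := hB.isSelfAdjoint
  rw [← cfc_id' ℝ B]
  refine norm_cfc_le hc fun r hr => ?_
  rw [hB.spectrum_real_eq_range_eigenvalues] at hr
  obtain ⟨i, rfl⟩ := hr
  exact h i

lemma EuclideanSpace.norm_toLp_ofReal {ι : Type*} [Fintype ι] (x : ι → ℝ) :
    ‖(toLp 2 fun i => (x i : ℂ) : EuclideanSpace ℂ ι)‖ = ‖(toLp 2 x : EuclideanSpace ℝ ι)‖ := by
  simp [EuclideanSpace.norm_eq]

lemma Matrix.l2_opNorm_le_l2_opNorm_map_ofReal (M : Matrix m n ℝ) :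
    ‖M‖ ≤ ‖M.map (algebraMap ℝ ℂ)‖ := by
  rw [l2_opNorm_def]
  refine ContinuousLinearMap.opNorm_le_bound _ (norm_nonneg _) fun x => ?_
  have hMx : (M.map (algebraMap ℝ ℂ) *ᵥ fun i => (x i : ℂ)) = fun j => ((M *ᵥ x) j : ℂ) :=
    funext fun j => (RingHom.map_mulVec (algebraMap ℝ ℂ) M x j).symm
  have := l2_opNorm_mulVec (M.map (algebraMap ℝ ℂ)) (toLp 2 fun i => (x i : ℂ))
  rw [EuclideanSpace.norm_toLp_ofReal, ofLp_toLp, hMx] at this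
  exact (EuclideanSpace.norm_toLp_ofReal _).symm.trans_le this

lemma Matrix.l2_opNorm_le_spectralRadius_map_ofReal {C : Matrix n n ℝ} (hC : Cᵀ = -C) :
    ‖C‖ ≤ (spectralRadius ℂ (C.map (algebraMap ℝ ℂ))).toReal := by
  have hskew : (C.map (algebraMap ℝ ℂ))ᴴ = -C.map (algebraMap ℝ ℂ) := by
    ext i j
    simpa using congr_arg (fun M : Matrix n n ℝ => (M i j : ℂ)) hC
  have := skewAdjoint.isStarNormal_of_mem (R := Matrix n n ℂ) hskew
  rw [IsStarNormal.spectralRadius_eq_nnnorm, ENNReal.coe_toReal, coe_nnnorm]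
  exact l2_opNorm_le_l2_opNorm_map_ofReal C

lemma ContinuousLinearMap.mul_norm_le_norm_apply_of_coercive {E : Type*}
    [NormedAddCommGroup E] [InnerProductSpace ℝ E] {T : E →L[ℝ] E} {c : ℝ}
    (h : ∀ x, c * ‖x‖ ^ 2 ≤ ⟪x, T x⟫) (x : E) : c * ‖x‖ ≤ ‖T x‖ := by
  rcases (norm_nonneg x).eq_or_lt with hx | hx
  · rw [← hx, mul_zero]
    exact norm_nonneg _
  · refine le_of_mul_le_mul_right ?_ hx
    calc c * ‖x‖ * ‖x‖ = c * ‖x‖ ^ 2 := by ring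
      _ ≤ ⟪x, T x⟫ := h x
      _ ≤ ‖x‖ * ‖T x‖ := real_inner_le_norm x (T x)
      _ = ‖T x‖ * ‖x‖ := mul_comm _ _

lemma Matrix.l2_opNorm_inv_le_of_coercive {A : Matrix n n ℝ} {c : ℝ} (hc : 0 < c)
    (h : ∀ x : n → ℝ, c * (x ⬝ᵥ x) ≤ x ⬝ᵥ A *ᵥ x) : ‖A⁻¹‖ ≤ c⁻¹ := by
  have hT : ∀ x, c * ‖x‖ ≤ ‖toEuclideanCLM (𝕜 := ℝ) A x‖ := by
    refine ContinuousLinearMap.mul_norm_le_norm_apply_of_coercive fun x => ?_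
    rw [inner_toEuclideanCLM, ← real_inner_self_eq_norm_sq, EuclideanSpace.inner_eq_star_dotProduct]
    simpa [dotProduct_comm] using h x
  have hA : IsUnit A := by
    refine mulVec_injective_iff_isUnit.mp fun x y hxy => ?_
    have := hT (toLp 2 (x - y))
    rw [toEuclideanCLM_toLp, mulVec_sub, hxy, sub_self, toLp_zero, norm_zero] at this
    have : toLp 2 (x - y) = 0 := norm_le_zero_iff.mp (nonpos_of_mul_nonpos_right this hc)
    exact sub_eq_zero.mp ((toLp_eq_zero 2).mp this)
  rw [← l2_opNorm_toEuclideanCLM]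
  refine ContinuousLinearMap.opNorm_le_bound _ (inv_nonneg.mpr hc.le) fun y => ?_
  have hy : toEuclideanCLM (𝕜 := ℝ) A (toEuclideanCLM (𝕜 := ℝ) A⁻¹ y) = y := by
    change (toEuclideanCLM (𝕜 := ℝ) A * toEuclideanCLM (𝕜 := ℝ) A⁻¹) y = y
    rw [← map_mul, mul_nonsing_inv _ ((isUnit_iff_isUnit_det A).mp hA), map_one]
    rfl
  rw [inv_mul_eq_div, le_div_iff₀' hc]
  simpa [hy] using hT (toEuclideanCLM (𝕜 := ℝ) A⁻¹ y)

end


theorem stmt1 {n : Type*} [Fintype n] [DecidableEq n] [Nonempty n]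
    (A : Matrix n n ℝ)
    (hBpd : ((1/2 : ℝ) • (A + Aᵀ)).PosDef) :
    ‖Matrix.toEuclideanCLM (𝕜 := ℝ) A‖ * ‖Matrix.toEuclideanCLM (𝕜 := ℝ) A⁻¹‖ ≤
      ((⨆ i, hBpd.isHermitian.eigenvalues i) +
        (spectralRadius ℂ (((1/2 : ℝ) • (A - Aᵀ)).map (algebraMap ℝ ℂ))).toReal) /
        (⨅ i, hBpd.isHermitian.eigenvalues i) := by
  set B : Matrix n n ℝ := (1/2 : ℝ) • (A + Aᵀ)
  set C : Matrix n n ℝ := (1/2 : ℝ) • (A - Aᵀ)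
  set μ := hBpd.isHermitian.eigenvalues
  have hμ_le_max (i : n) : |μ i| ≤ ⨆ j, μ j :=
    (abs_of_pos (hBpd.eigenvalues_pos i)).trans_le (le_ciSup (Set.finite_range μ).bddAbove i)
  have hmin_pos : 0 < ⨅ i, μ i := by
    obtain ⟨i, hi⟩ : ∃ i, μ i = ⨅ j, μ j := exists_eq_ciInf_of_finite
    exact hi ▸ hBpd.eigenvalues_pos i
  have hC : Cᵀ = -C := by
    simp only [C, transpose_smul, transpose_sub, transpose_transpose, ← smul_neg, neg_sub]
  have hA : ‖A‖ ≤ (⨆ i, μ i) + (spectralRadius ℂ (C.map (algebraMap ℝ ℂ))).toReal :=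
    calc ‖A‖ = ‖B + C‖ := by congr 1; module
      _ ≤ ‖B‖ + ‖C‖ := norm_add_le B C
      _ ≤ _ := add_le_add
        (hBpd.isHermitian.l2_opNorm_le_of_abs_eigenvalues_le
          ((abs_nonneg _).trans (hμ_le_max (Classical.arbitrary n))) hμ_le_max)
        (l2_opNorm_le_spectralRadius_map_ofReal hC)
  have hA_inv : ‖A⁻¹‖ ≤ (⨅ i, μ i)⁻¹ := l2_opNorm_inv_le_of_coercive hmin_pos fun x => by
    rw [← dotProduct_mulVec_half_smul_add_transpose]
    exact hBpd.isHermitian.iInf_eigenvalues_mul_dotProduct_le x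
  rw [l2_opNorm_toEuclideanCLM, l2_opNorm_toEuclideanCLM, div_eq_mul_inv]
  exact mul_le_mul hA hA_inv (norm_nonneg _) ((norm_nonneg _).trans hA)
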